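/- Let D be a real-valued function on pairs of positive definite n×n complex matrices such that D(ρ, σ) ≤ (1/(1−γ))·D(ρ, σ #_γ ρ) for all positive definite ρ, σ and all γ ∈ (0,1). Then for all positive definite ρ, σ and all 0 < γ₁ ≤ γ₂ < 1: (1/(1−γ₁))·D(ρ, σ #_{γ₁} ρ) ≤ (1/(1−γ₂))·D(ρ, σ #_{γ₂} ρ); that is, γ ↦ (1/(1−γ))·D(ρ, σ #_γ ρ) is monotone nondecreasing on (0,1). -/

import Mathlib

set_option maxHeartbeats 1000000

open Matrix
open scoped ComplexOrder

/-- Functional calculus for Hermitian matrices: apply `f : ℝ → ℝ` to the eigenvalues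
in a spectral decomposition (and return `0` on non-Hermitian input). -/
noncomputable def mfun {ι : Type*} [Fintype ι] [DecidableEq ι]
    (f : ℝ → ℝ) (A : Matrix ι ι ℂ) : Matrix ι ι ℂ :=
  letI := Classical.propDecidable A.IsHermitian
  if hA : A.IsHermitian then hA.cfc f else 0

/-- Real matrix power `A ^ γ` via functional calculus (with `Real.rpow` on eigenvalues,
so that `0 ^ γ = 0` for `γ ≠ 0`, giving the generalized inverse for `γ = -1`). -/
noncomputable def mpow {ι : Type*} [Fintype ι] [DecidableEq ι]
    (A : Matrix ι ι ℂ) (γ : ℝ) : Matrix ι ι ℂ :=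
  mfun (fun x => x ^ γ) A

/-- The `γ`-weighted geometric mean
`σ #_γ ρ := σ^{1/2} · (σ^{-1/2} · ρ · σ^{-1/2})^γ · σ^{1/2}`. -/
noncomputable def geomMean {ι : Type*} [Fintype ι] [DecidableEq ι]
    (σ ρ : Matrix ι ι ℂ) (γ : ℝ) : Matrix ι ι ℂ :=
  mpow σ (1 / 2) * mpow (mpow σ (-(1 / 2)) * ρ * mpow σ (-(1 / 2))) γ * mpow σ (1 / 2)

section Aux
variable {ι : Type*} [Fintype ι] [DecidableEq ι]

lemma contOn (A : Matrix ι ι ℂ) (f : ℝ → ℝ) :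
    ContinuousOn f (spectrum ℝ A) := (Matrix.finite_real_spectrum (A := A)).continuousOn f

lemma mfun_eq {A : Matrix ι ι ℂ} (hA : A.IsHermitian) (f : ℝ → ℝ) :
    mfun f A = cfc f A := by
  unfold mfun
  rw [dif_pos hA, ← hA.cfc_eq]

lemma mpow_eq {A : Matrix ι ι ℂ} (hA : A.IsHermitian) (γ : ℝ) :
    mpow A γ = cfc (fun x : ℝ => x ^ γ) A := mfun_eq hA _

lemma spec_pos {A : Matrix ι ι ℂ} (hA : A.PosDef) : ∀ x ∈ spectrum ℝ A, 0 < x := by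
  intro x hx
  rw [hA.isHermitian.spectrum_real_eq_range_eigenvalues] at hx
  obtain ⟨i, rfl⟩ := hx
  exact hA.eigenvalues_pos i

lemma posDef_conj {A B : Matrix ι ι ℂ} (hA : A.PosDef) (hB : IsUnit B) :
    (B * A * Bᴴ).PosDef := by
  exact hA.mul_mul_conjTranspose_same (Matrix.vecMul_injective_iff_isUnit.mpr hB)

lemma isHermitian_cfc (A : Matrix ι ι ℂ) (f : ℝ → ℝ) : (cfc f A).IsHermitian := by
  have h : IsSelfAdjoint (cfc f A) := cfc_predicate f A
  exact h

lemma posDef_cfc {A : Matrix ι ι ℂ} (hA : A.PosDef) {f : ℝ → ℝ}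
    (hf : ∀ x ∈ spectrum ℝ A, 0 < f x) : (cfc f A).PosDef := by
  rw [hA.isHermitian.cfc_eq, Matrix.IsHermitian.cfc]
  rw [Unitary.conjStarAlgAut_apply]
  rw [show star ((hA.isHermitian.eigenvectorUnitary : Matrix ι ι ℂ)) =
      (hA.isHermitian.eigenvectorUnitary : Matrix ι ι ℂ)ᴴ from rfl]
  refine posDef_conj ?_ ?_
  · refine Matrix.posDef_diagonal_iff.mpr fun i => ?_
    have := hf _ (hA.isHermitian.eigenvalues_mem_spectrum_real i)
    exact RCLike.ofReal_pos.mpr this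
  · have hU := Matrix.mem_unitaryGroup_iff.mp (hA.isHermitian.eigenvectorUnitary).2
    exact ⟨⟨_, _, hU, mul_eq_one_comm.mp hU⟩, rfl⟩

lemma mpow_isHermitian {A : Matrix ι ι ℂ} (hA : A.IsHermitian) (γ : ℝ) :
    (mpow A γ).IsHermitian := by
  rw [mpow_eq hA]; exact isHermitian_cfc A _

lemma mpow_posDef {A : Matrix ι ι ℂ} (hA : A.PosDef) (γ : ℝ) :
    (mpow A γ).PosDef := by
  rw [mpow_eq hA.isHermitian]
  exact posDef_cfc hA fun x hx => Real.rpow_pos_of_pos (spec_pos hA x hx) γ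

lemma mpow_add {A : Matrix ι ι ℂ} (hA : A.PosDef) (x y : ℝ) :
    mpow A x * mpow A y = mpow A (x + y) := by
  rw [mpow_eq hA.isHermitian, mpow_eq hA.isHermitian, mpow_eq hA.isHermitian,
    ← cfc_mul _ _ A (contOn A _) (contOn A _)]
  exact cfc_congr fun t ht => (Real.rpow_add (spec_pos hA t ht) x y).symm

lemma mpow_zero {A : Matrix ι ι ℂ} (hA : A.IsHermitian) : mpow A 0 = 1 := by
  rw [mpow_eq hA]
  have : cfc (fun x : ℝ => x ^ (0:ℝ)) A = cfc (fun _ : ℝ => (1:ℝ)) A :=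
    cfc_congr fun t _ => Real.rpow_zero t
  rw [this, cfc_const_one ℝ A hA.isSelfAdjoint]

lemma mpow_one {A : Matrix ι ι ℂ} (hA : A.IsHermitian) : mpow A 1 = A := by
  rw [mpow_eq hA]
  have : cfc (fun x : ℝ => x ^ (1:ℝ)) A = cfc (fun x : ℝ => x) A :=
    cfc_congr fun t _ => Real.rpow_one t
  rw [this, cfc_id' ℝ A hA.isSelfAdjoint]

lemma mpow_mul_self_inv {A : Matrix ι ι ℂ} (hA : A.PosDef) (x : ℝ) :
    mpow A x * mpow A (-x) = 1 := by
  rw [mpow_add hA, add_neg_cancel, mpow_zero hA.isHermitian]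

lemma mpow_mpow {A : Matrix ι ι ℂ} (hA : A.PosDef) (x y : ℝ) :
    mpow (mpow A x) y = mpow A (x * y) := by
  rw [mpow_eq (mpow_isHermitian hA.isHermitian x), mpow_eq hA.isHermitian,
    mpow_eq hA.isHermitian,
    ← cfc_comp (fun t : ℝ => t ^ y) (fun t : ℝ => t ^ x) A hA.isHermitian.isSelfAdjoint
      (((spectrum ℝ A).toFinite.image _).continuousOn _) (contOn A _)]
  exact cfc_congr fun t ht => by
    rw [Function.comp_apply, ← Real.rpow_mul (spec_pos hA t ht).le]

/-- Conjugation by a unitary as a star algebra homomorphism. -/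
noncomputable def conjSAH (X : Matrix ι ι ℂ) (h1 : X * Xᴴ = 1) :
    Matrix ι ι ℂ →⋆ₐ[ℂ] Matrix ι ι ℂ where
  toFun M := X * M * Xᴴ
  map_one' := by show X * 1 * Xᴴ = 1; rw [mul_one, h1]
  map_mul' M N := by
    have h2 : Xᴴ * X = 1 := mul_eq_one_comm.mp h1
    have key : Xᴴ * (X * (N * Xᴴ)) = N * Xᴴ := by rw [← mul_assoc, h2, one_mul]
    simp only [mul_assoc, key]
  map_zero' := by simp
  map_add' M N := by simp [Matrix.mul_add, Matrix.add_mul]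
  commutes' c := by
    simp only [Algebra.algebraMap_eq_smul_one, mul_smul_comm, smul_mul_assoc, mul_one, h1]
  map_star' M := by
    show X * star M * Xᴴ = star (X * M * Xᴴ)
    simp only [Matrix.star_eq_conjTranspose, conjTranspose_mul, conjTranspose_conjTranspose,
      mul_assoc]

lemma cfc_conj_unitary {X A : Matrix ι ι ℂ} (h1 : X * Xᴴ = 1) (hA : A.IsHermitian)
    (f : ℝ → ℝ) : cfc f (X * A * Xᴴ) = X * cfc f A * Xᴴ := by
  have hXA : IsSelfAdjoint (X * A * Xᴴ) := isHermitian_mul_mul_conjTranspose X hA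
  have hcont : Continuous (conjSAH X h1) := by
    show Continuous fun M : Matrix ι ι ℂ => X * M * Xᴴ
    exact (continuous_const.matrix_mul continuous_id).matrix_mul continuous_const
  exact (StarAlgHom.map_cfc (conjSAH X h1) f A (contOn A f) hcont hA.isSelfAdjoint hXA).symm

lemma mpow_conj_unitary {X A : Matrix ι ι ℂ} (h1 : X * Xᴴ = 1) (hA : A.IsHermitian)
    (γ : ℝ) : mpow (X * A * Xᴴ) γ = X * mpow A γ * Xᴴ := by
  rw [mpow_eq (isHermitian_mul_mul_conjTranspose X hA), mpow_eq hA, cfc_conj_unitary h1 hA]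

lemma geomMean_posDef {ρ σ : Matrix ι ι ℂ} (hρ : ρ.PosDef) (hσ : σ.PosDef) (γ : ℝ) :
    (geomMean σ ρ γ).PosDef := by
  have hS : (mpow σ (1/2)).PosDef := mpow_posDef hσ _
  have hS' : (mpow σ (-(1/2))).PosDef := mpow_posDef hσ _
  have hT : (mpow σ (-(1/2)) * ρ * mpow σ (-(1/2))).PosDef := by
    have := posDef_conj hρ hS'.isUnit
    rwa [hS'.isHermitian.eq] at this
  have := posDef_conj (mpow_posDef hT γ) hS.isUnit
  rwa [hS.isHermitian.eq] at this

lemma geomMean_comp {ρ σ : Matrix ι ι ℂ} (hρ : ρ.PosDef) (hσ : σ.PosDef) (a b : ℝ) :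
    geomMean (geomMean σ ρ a) ρ b = geomMean σ ρ (a + b * (1 - a)) := by
  set S := mpow σ (1/2) with hSdef
  set S' := mpow σ (-(1/2)) with hS'def
  set T := S' * ρ * S' with hTdef
  have hS : S.PosDef := mpow_posDef hσ _
  have hS' : S'.PosDef := mpow_posDef hσ _
  have hSS' : S * S' = 1 := mpow_mul_self_inv hσ _
  have hS'S : S' * S = 1 := mul_eq_one_comm.mp hSS'
  have hT : T.PosDef := by
    have := posDef_conj hρ hS'.isUnit
    rwa [hS'.isHermitian.eq] at this
  have hTmerge : ∀ (x y : ℝ) (C : Matrix ι ι ℂ),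
      mpow T x * (mpow T y * C) = mpow T (x + y) * C := fun x y C => by
    rw [← mul_assoc, mpow_add hT]
  set μ := geomMean σ ρ a with hμdef
  have hμeq : μ = S * mpow T a * S := rfl
  have hμ : μ.PosDef := geomMean_posDef hρ hσ a
  set P := mpow μ (1/2) with hPdef
  set P' := mpow μ (-(1/2)) with hP'def
  have hP : P.PosDef := mpow_posDef hμ _
  have hP' : P'.PosDef := mpow_posDef hμ _
  have hPP' : P * P' = 1 := mpow_mul_self_inv hμ _
  have hP'P : P' * P = 1 := mul_eq_one_comm.mp hPP'
  have hPP : P * P = μ := by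
    rw [hPdef, mpow_add hμ, show (1:ℝ)/2 + 1/2 = 1 by norm_num, mpow_one hμ.isHermitian]
  have hρeq : S * (T * S) = ρ := by
    rw [hTdef]
    simp only [mul_assoc]
    rw [hS'S, mul_one, ← mul_assoc, hSS', one_mul]
  set X := P' * (S * mpow T (a/2)) with hXdef
  have hXH : Xᴴ = mpow T (a/2) * (S * P') := by
    rw [hXdef, conjTranspose_mul, conjTranspose_mul, hP'.isHermitian.eq, hS.isHermitian.eq,
      (mpow_isHermitian hT.isHermitian _).eq, mul_assoc]
  have hXX : X * Xᴴ = 1 := by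
    rw [hXdef, hXH]
    simp only [mul_assoc]
    rw [hTmerge, show a/2 + a/2 = a by ring]
    rw [show S * (mpow T a * (S * P')) = μ * P' by rw [hμeq]; simp only [mul_assoc]]
    rw [← hPP]
    simp only [mul_assoc]
    rw [hPP', mul_one, hP'P]
  have hinner : P' * ρ * P' = X * mpow T (1-a) * Xᴴ := by
    rw [hXdef, hXH]
    simp only [mul_assoc]
    rw [hTmerge, hTmerge, show a/2 + (1-a) + a/2 = (1:ℝ) by ring, mpow_one hT.isHermitian]
    rw [show S * (T * (S * P')) = ρ * P' by rw [← hρeq]; simp only [mul_assoc]]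
  have step2 : mpow (X * mpow T (1-a) * Xᴴ) b = X * mpow T ((1-a)*b) * Xᴴ := by
    rw [mpow_conj_unitary hXX (mpow_isHermitian hT.isHermitian _), mpow_mpow hT]
  show P * mpow (P' * ρ * P') b * P = geomMean σ ρ (a + b * (1-a))
  rw [hinner, step2]
  show P * (X * mpow T ((1-a)*b) * Xᴴ) * P = S * mpow T (a + b * (1-a)) * S
  rw [hXdef, hXH]
  simp only [mul_assoc]
  rw [hP'P, mul_one, hTmerge, hTmerge,
    show a/2 + (1-a)*b + a/2 = a + b * (1-a) by ring,
    ← mul_assoc P P', hPP', one_mul]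

end Aux

/-- If a real-valued function `D` on pairs of positive definite matrices satisfies
`D(ρ, σ) ≤ (1/(1-γ)) · D(ρ, σ #_γ ρ)` for all positive definite `ρ, σ` and all `γ ∈ (0,1)`,
then `γ ↦ (1/(1-γ)) · D(ρ, σ #_γ ρ)` is monotone nondecreasing on `(0,1)`. -/
theorem geom_weighted_monotone {n : ℕ}
    (D : Matrix (Fin n) (Fin n) ℂ → Matrix (Fin n) (Fin n) ℂ → ℝ)
    (hD : ∀ ρ σ : Matrix (Fin n) (Fin n) ℂ, ρ.PosDef → σ.PosDef →
      ∀ γ ∈ Set.Ioo (0 : ℝ) 1, D ρ σ ≤ (1 / (1 - γ)) * D ρ (geomMean σ ρ γ)) :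
    ∀ ρ σ : Matrix (Fin n) (Fin n) ℂ, ρ.PosDef → σ.PosDef →
      ∀ γ₁ γ₂ : ℝ, 0 < γ₁ → γ₁ ≤ γ₂ → γ₂ < 1 →
        (1 / (1 - γ₁)) * D ρ (geomMean σ ρ γ₁) ≤ (1 / (1 - γ₂)) * D ρ (geomMean σ ρ γ₂) := by
  intro ρ σ hρ hσ γ₁ γ₂ hγ₁ h12 hγ₂
  rcases eq_or_lt_of_le h12 with rfl | hlt
  · exact le_refl _
  have h1γ₁ : 0 < 1 - γ₁ := by linarith
  have h1γ₂ : 0 < 1 - γ₂ := by linarith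
  have hb : (γ₂ - γ₁) / (1 - γ₁) ∈ Set.Ioo (0:ℝ) 1 := by
    constructor
    · apply div_pos <;> linarith
    · rw [div_lt_one h1γ₁]; linarith
  have harg : γ₁ + (γ₂ - γ₁) / (1 - γ₁) * (1 - γ₁) = γ₂ := by
    field_simp
    ring
  have key := hD ρ (geomMean σ ρ γ₁) hρ (geomMean_posDef hρ hσ γ₁) _ hb
  rw [geomMean_comp hρ hσ, harg] at key
  have hbne : 0 < 1 - (γ₂ - γ₁) / (1 - γ₁) := by linarith [hb.2]
  calc (1 / (1 - γ₁)) * D ρ (geomMean σ ρ γ₁)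
      ≤ (1 / (1 - γ₁)) * ((1 / (1 - (γ₂ - γ₁) / (1 - γ₁))) * D ρ (geomMean σ ρ γ₂)) := by
        apply mul_le_mul_of_nonneg_left key (by positivity)
    _ = (1 / (1 - γ₂)) * D ρ (geomMean σ ρ γ₂) := by
        rw [← mul_assoc]
        congr 1
        field_simp
        rw [div_eq_one_iff_eq (by linarith)]; ring
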